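/- arXiv:2207.09916 — 3 statements merged into one kernel-verified Lean document; each statement's English description precedes it below -/
import Mathlib

section
/- If n clients independently apply the scalar PBM with common parameters (m, θ) to inputs x₁,…,xₙ ∈ [−c,c], then \hat{μ} = (c/(nmθ))(∑ᵢ Zᵢ − mn/2) is an unbiased estimator of μ = (1/n)∑ᵢ xᵢ with variance at most c²/(4nmθ²). -/
/-!
Writing `Yᵢ = Zᵢ - m pᵢ`, the estimator is affine in the `Yᵢ`: `μ̂ = μ + (c/(nmθ)) ∑ᵢ Yᵢ`, because
`∑ᵢ m pᵢ = (mθ/c) ∑ᵢ xᵢ + mn/2`. The `Yᵢ` are independent and centred, so `μ̂` is unbiased and the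
cross terms of `(μ̂ - μ)²` vanish, leaving `(c/(nmθ))² ∑ᵢ m pᵢ(1 - pᵢ) ≤ (c/(nmθ))² · nm/4`. The
binomial moments are the Bernstein-polynomial identities.
-/

open Finset

/- Sums `∑ k, (∏ i, w i (k i)) * F k` are expectations of `F` under the joint law of independent
coordinates with marginals `w i`. -/
namespace Fintype

variable {ι : Type*} {κ : ι → Type*} [Fintype ι] [DecidableEq ι] [∀ i, Fintype (κ i)]
  {R : Type*} [CommSemiring R] {w : ∀ i, κ i → R}

theorem sum_prod_mul_prod_eq_prod_sum (hw : ∀ i, ∑ t, w i t = 1) (f : ∀ i, κ i → R)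
    (s : Finset ι) :
    ∑ k : ∀ i, κ i, (∏ i, w i (k i)) * ∏ i ∈ s, f i (k i) = ∏ i ∈ s, ∑ t, w i t * f i t :=
  calc ∑ k : ∀ i, κ i, (∏ i, w i (k i)) * ∏ i ∈ s, f i (k i)
      = ∑ k : ∀ i, κ i, ∏ i, w i (k i) * (if i ∈ s then f i (k i) else 1) := by
        simp only [prod_mul_distrib, Fintype.prod_ite_mem]
    _ = ∏ i, ∑ t, w i t * (if i ∈ s then f i t else 1) :=
        (Fintype.prod_sum fun i t => w i t * (if i ∈ s then f i t else 1)).symm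
    _ = ∏ i, if i ∈ s then ∑ t, w i t * f i t else 1 := by
        refine Finset.prod_congr rfl fun i _ => ?_
        split_ifs <;> simp [hw]
    _ = ∏ i ∈ s, ∑ t, w i t * f i t := Fintype.prod_ite_mem s _

theorem sum_prod_eq_one (hw : ∀ i, ∑ t, w i t = 1) : ∑ k : ∀ i, κ i, ∏ i, w i (k i) = 1 := by
  simpa using sum_prod_mul_prod_eq_prod_sum hw (fun _ _ => (1 : R)) ∅

theorem sum_prod_mul_apply (hw : ∀ i, ∑ t, w i t = 1) (j : ι) (f : κ j → R) :
    ∑ k : ∀ i, κ i, (∏ i, w i (k i)) * f (k j) = ∑ t, w j t * f t := by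
  simpa using sum_prod_mul_prod_eq_prod_sum hw (Pi.single (M := fun i => κ i → R) j f) {j}

theorem sum_prod_mul_sum_apply_eq_zero (hw : ∀ i, ∑ t, w i t = 1) {Y : ∀ i, κ i → R}
    (hY : ∀ i, ∑ t, w i t * Y i t = 0) :
    ∑ k : ∀ i, κ i, (∏ i, w i (k i)) * ∑ i, Y i (k i) = 0 := by
  simp_rw [mul_sum]
  rw [sum_comm]
  exact Finset.sum_eq_zero fun j _ => (sum_prod_mul_apply hw j (Y j)).trans (hY j)

theorem sum_prod_mul_apply_mul_apply_of_ne (hw : ∀ i, ∑ t, w i t = 1) {i j : ι} (hij : i ≠ j)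
    (f : κ i → R) (g : κ j → R) :
    ∑ k : ∀ i, κ i, (∏ l, w l (k l)) * (f (k i) * g (k j))
      = (∑ t, w i t * f t) * ∑ t, w j t * g t := by
  have := sum_prod_mul_prod_eq_prod_sum hw
    (Pi.single (M := fun i => κ i → R) i f + Pi.single j g) {i, j}
  simpa [prod_pair hij, hij, hij.symm] using this

theorem sum_prod_mul_sum_apply_sq (hw : ∀ i, ∑ t, w i t = 1) {Y : ∀ i, κ i → R}
    (hY : ∀ i, ∑ t, w i t * Y i t = 0) :
    ∑ k : ∀ i, κ i, (∏ i, w i (k i)) * (∑ i, Y i (k i)) ^ 2 = ∑ i, ∑ t, w i t * Y i t ^ 2 := by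
  have hpair : ∀ i j, ∑ k : ∀ i, κ i, (∏ l, w l (k l)) * (Y i (k i) * Y j (k j))
      = if i = j then ∑ t, w i t * Y i t ^ 2 else 0 := by
    intro i j
    split_ifs with hij
    · subst hij
      simp_rw [← sq]
      exact sum_prod_mul_apply hw i (fun t => Y i t ^ 2)
    · rw [sum_prod_mul_apply_mul_apply_of_ne hw hij, hY, zero_mul]
  calc ∑ k : ∀ i, κ i, (∏ i, w i (k i)) * (∑ i, Y i (k i)) ^ 2
      = ∑ i, ∑ j, ∑ k : ∀ i, κ i, (∏ l, w l (k l)) * (Y i (k i) * Y j (k j)) := by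
        simp_rw [sq, sum_mul_sum, mul_sum]
        rw [sum_comm]
        exact Finset.sum_congr rfl fun i _ => Finset.sum_comm
    _ = ∑ i, ∑ t, w i t * Y i t ^ 2 := by simp [hpair]

end Fintype

open Polynomial

namespace bernsteinPolynomial

variable {R : Type*} [CommRing R] (m : ℕ) (p : R)

theorem sum_fin_eval : ∑ k : Fin (m + 1), (bernsteinPolynomial R m k).eval p = 1 := by
  rw [Fin.sum_univ_eq_sum_range (fun k => (bernsteinPolynomial R m k).eval p), ← eval_finsetSum,
    bernsteinPolynomial.sum, eval_one]

theorem sum_fin_eval_mul_sub :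
    ∑ k : Fin (m + 1), (bernsteinPolynomial R m k).eval p * ((k : ℕ) - m * p) = 0 := by
  have h := congrArg (eval p) (bernsteinPolynomial.sum_smul R m)
  simp only [nsmul_eq_mul, eval_finsetSum, eval_mul, eval_natCast, eval_X] at h
  simp_rw [mul_sub, sum_sub_distrib, ← sum_mul, sum_fin_eval, one_mul]
  rw [Fin.sum_univ_eq_sum_range (fun k => (bernsteinPolynomial R m k).eval p * k)]
  simp only [mul_comm _ (Nat.cast _), h, sub_self]

theorem sum_fin_eval_mul_sub_sq :
    ∑ k : Fin (m + 1), (bernsteinPolynomial R m k).eval p * ((k : ℕ) - m * p) ^ 2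
      = m * p * (1 - p) := by
  have h := congrArg (eval p) (bernsteinPolynomial.variance R m)
  simp only [eval_finsetSum, eval_mul, eval_pow, eval_sub, eval_X, eval_natCast,
    eval_one, nsmul_eq_mul] at h
  rw [Fin.sum_univ_eq_sum_range
    (fun k => (bernsteinPolynomial R m k).eval p * ((k : ℕ) - m * p) ^ 2), ← h]
  refine sum_congr rfl fun k _ => ?_
  ring

end bernsteinPolynomial

theorem pbm_estimator_eq_mean_add {c θ : ℝ} {m n : ℕ} (hc : c ≠ 0) (hθ : θ ≠ 0) (hm : m ≠ 0)
    (x : Fin n → ℝ) (s : Fin n → ℕ) :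
    c / (n * m * θ) * (((∑ i, s i : ℕ) : ℝ) - m * n / 2)
      = (∑ i, x i) / n + c / (n * m * θ) * ∑ i, ((s i : ℝ) - m * (θ * x i / c + 1 / 2)) := by
  push_cast
  simp only [sum_sub_distrib, ← mul_sum, sum_add_distrib, sum_const, card_univ,
    Fintype.card_fin, nsmul_eq_mul, ← sum_div]
  field_simp
  ring

open Fintype

theorem pbm_mean_estimation_general
    (c θ : ℝ) (m n : ℕ) (x : Fin n → ℝ)
    (hc : 0 < c) (hθ0 : 0 < θ) (hm : 1 ≤ m) :
    let p : Fin n → ℝ := fun i => θ * x i / c + 1/2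
    let B : Fin n → ℕ → ℝ :=
      fun i k => (m.choose k : ℝ) * (p i) ^ k * (1 - p i) ^ (m - k)
    let est : ℕ → ℝ := fun s => c / (n * m * θ) * ((s : ℝ) - m * n / 2)
    let μ : ℝ := (∑ i, x i) / n
    (∑ k : Fin n → Fin (m + 1),
        (∏ i, B i (k i)) * est (∑ i, (k i : ℕ)) = μ) ∧
    ∑ k : Fin n → Fin (m + 1),
        (∏ i, B i (k i)) * (est (∑ i, (k i : ℕ)) - μ) ^ 2
      ≤ c ^ 2 / (4 * n * m * θ ^ 2) := by
  intro p B est μ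
  set a := c / (n * m * θ)
  have hB : ∀ i (t : ℕ), B i t = (bernsteinPolynomial ℝ m t).eval (p i) := by
    simp [B, bernsteinPolynomial]
  have hw : ∀ i, ∑ t : Fin (m + 1), B i t = 1 := by
    simp only [hB, bernsteinPolynomial.sum_fin_eval, implies_true]
  let Y : Fin n → Fin (m + 1) → ℝ := fun i t => t - m * p i
  have hY : ∀ i, ∑ t : Fin (m + 1), B i t * Y i t = 0 := by
    simp only [hB, Y, bernsteinPolynomial.sum_fin_eval_mul_sub, implies_true]
  have hest : ∀ k : Fin n → Fin (m + 1), est (∑ i, (k i : ℕ)) = μ + a * ∑ i, Y i (k i) :=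
    fun k => pbm_estimator_eq_mean_add hc.ne' hθ0.ne' (by omega) x (fun i => k i)
  refine ⟨?_, ?_⟩
  · calc ∑ k : Fin n → Fin (m + 1), (∏ i, B i (k i)) * est (∑ i, (k i : ℕ))
        = (∑ k : Fin n → Fin (m + 1), ∏ i, B i (k i)) * μ
          + a * ∑ k : Fin n → Fin (m + 1), (∏ i, B i (k i)) * ∑ i, Y i (k i) := by
          simp_rw [hest, mul_add, sum_add_distrib, sum_mul, mul_sum, mul_left_comm a]
      _ = μ := by rw [sum_prod_eq_one hw, sum_prod_mul_sum_apply_eq_zero hw hY]; ring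
  · calc ∑ k : Fin n → Fin (m + 1), (∏ i, B i (k i)) * (est (∑ i, (k i : ℕ)) - μ) ^ 2
        = a ^ 2 * ∑ k : Fin n → Fin (m + 1), (∏ i, B i (k i)) * (∑ i, Y i (k i)) ^ 2 := by
          simp_rw [hest, add_sub_cancel_left, mul_pow, mul_sum, mul_left_comm (a ^ 2)]
      _ = a ^ 2 * ∑ i, m * p i * (1 - p i) := by
          rw [sum_prod_mul_sum_apply_sq hw hY]
          simp only [hB, Y, bernsteinPolynomial.sum_fin_eval_mul_sub_sq]
      _ ≤ a ^ 2 * ∑ _i : Fin n, (m : ℝ) / 4 := by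
          gcongr with i
          nlinarith [sq_nonneg (p i - 1 / 2)]
      _ = c ^ 2 / (4 * n * m * θ ^ 2) := by
          simp only [a, sum_const, card_univ, Fintype.card_fin, nsmul_eq_mul]
          field_simp

/-- Unbiasedness and variance bound for the `n`-client scalar PBM:
with independent `Zᵢ ~ Binom(m, pᵢ)`, `pᵢ = θ·xᵢ/c + 1/2`, the estimator
`μ̂ = (c/(nmθ))(∑ᵢ Zᵢ − mn/2)` satisfies `E[μ̂] = μ := (1/n)∑ᵢ xᵢ` and
`Var(μ̂) ≤ c²/(4nmθ²)`. Expectations are written out explicitly over the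
joint law of the independent binomials. -/
theorem pbm_mean_estimation
    (c θ : ℝ) (m n : ℕ) (x : Fin n → ℝ)
    (hc : 0 < c) (hθ0 : 0 < θ) (hθ : θ ≤ 1/4) (hm : 1 ≤ m) (hn : 1 ≤ n)
    (hx : ∀ i, |x i| ≤ c) :
    let p : Fin n → ℝ := fun i => θ * x i / c + 1/2
    let B : Fin n → ℕ → ℝ :=
      fun i k => (m.choose k : ℝ) * (p i) ^ k * (1 - p i) ^ (m - k)
    let est : ℕ → ℝ := fun s => c / (n * m * θ) * ((s : ℝ) - m * n / 2)
    let μ : ℝ := (∑ i, x i) / n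
    (∑ k : Fin n → Fin (m + 1),
        (∏ i, B i (k i)) * est (∑ i, (k i : ℕ)) = μ) ∧
    ∑ k : Fin n → Fin (m + 1),
        (∏ i, B i (k i)) * (est (∑ i, (k i : ℕ)) - μ) ^ 2
      ≤ c ^ 2 / (4 * n * m * θ ^ 2) :=
  pbm_mean_estimation_general c θ m n x hc hθ0 hm
end

section
/- Extremal reduction: for α > 1, θ ∈ [0,1/4], and p₁,…,pₙ,p'₁ ∈ [1/2−θ, 1/2+θ], the divergence D_α(P_{X₁+⋯+Xₙ} ‖ P_{X'₁+X₂+⋯+Xₙ}), with Xᵢ ~ Ber(pᵢ) and X'₁ ~ Ber(p'₁) independent, is bounded by the maximum of the same divergence taken over parameter tuples whose entries all lie in the two-point set {1/2−θ, 1/2+θ}. -/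
/-
Both laws depend affinely on each single Bernoulli parameter: `ber t` is affine in `t`, and
`sumLaw` is multilinear in the summands' pmfs, being the coefficient sequence of the product of
their generating functions. The Hellinger sum `∑ₘ P(m) ^ α Q(m) ^ (1 - α)` is therefore convex in
each parameter, since `(x, y) ↦ x ^ α y ^ (1 - α)` is the perspective `y (x / y) ^ α` of the
convex function `x ↦ x ^ α`. A function that is convex in each coordinate on a box is maximised
at a vertex, and for `α > 1` the divergence `(α - 1)⁻¹ log (∑ₘ P(m) ^ α Q(m) ^ (1 - α))` is
increasing in the Hellinger sum.
-/

/-- Convolution of pmfs on `ℕ` (law of the sum of independent variables). -/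
def conv (p q : ℕ → ℝ) : ℕ → ℝ := fun n => ∑ k ∈ Finset.range (n + 1), p k * q (n - k)

/-- The pmf of a Bernoulli random variable with parameter `p`, viewed on `ℕ`. -/
def ber (p : ℝ) : ℕ → ℝ := fun k => if k = 0 then 1 - p else if k = 1 then p else 0

/-- The law of the sum of independent variables with the given pmfs. -/
def sumLaw {n : ℕ} (f : Fin n → ℕ → ℝ) : ℕ → ℝ :=
  (List.ofFn f).foldr conv (fun k => if k = 0 then 1 else 0)

/-- Rényi divergence of order `α` between pmfs on `ℕ`. -/
noncomputable def renyiDiv (α : ℝ) (p q : ℕ → ℝ) : ℝ :=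
  (α - 1)⁻¹ * Real.log (∑' n, (p n) ^ α * (q n) ^ (1 - α))

open Function Set PowerSeries

theorem conv_eq_coeff_mul (f g : ℕ → ℝ) (m : ℕ) : conv f g m = coeff m (mk f * mk g) := by
  rw [coeff_mul, Finset.Nat.sum_antidiagonal_eq_sum_range_succ_mk]
  simp [conv]

theorem sumLaw_succ {k : ℕ} (f : Fin (k + 1) → ℕ → ℝ) :
    sumLaw f = conv (f 0) (sumLaw fun i => f i.succ) := by
  simp [sumLaw, List.ofFn_succ]

theorem sumLaw_eq_coeff_prod {k : ℕ} (f : Fin k → ℕ → ℝ) (m : ℕ) :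
    sumLaw f m = coeff m (∏ i, mk (f i)) := by
  induction k generalizing m with
  | zero => simp [sumLaw, coeff_one]
  | succ k ih =>
    rw [sumLaw_succ, conv_eq_coeff_mul, Fin.prod_univ_succ]
    congr 3
    ext m
    rw [coeff_mk, ih]

theorem sumLaw_update_add {k : ℕ} (f : Fin k → ℕ → ℝ) (i : Fin k) (c d : ℝ) (g h : ℕ → ℝ) :
    sumLaw (update f i (c • g + d • h))
      = c • sumLaw (update f i g) + d • sumLaw (update f i h) := by
  ext m
  simp only [sumLaw_eq_coeff_prod, Pi.add_apply, Pi.smul_apply, smul_eq_mul]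
  simp only [apply_update (fun _ => mk), Finset.prod_update_of_mem (Finset.mem_univ i)]
  have hmk : mk (c • g + d • h) = c • mk g + d • mk h := by ext; simp
  rw [hmk, add_mul, smul_mul_assoc, smul_mul_assoc, map_add, coeff_smul, coeff_smul,
    smul_eq_mul, smul_eq_mul]

theorem conv_ber_zero (p : ℝ) (g : ℕ → ℝ) : conv (ber p) g 0 = (1 - p) * g 0 := by
  simp [conv, ber]

theorem conv_ber_succ (p : ℝ) (g : ℕ → ℝ) (m : ℕ) :
    conv (ber p) g (m + 1) = (1 - p) * g (m + 1) + p * g m := by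
  rw [conv, Finset.sum_range_succ', Finset.sum_range_succ']
  simp [ber, add_comm]

theorem sumLaw_ber_eq_zero {k : ℕ} (p : Fin k → ℝ) {m : ℕ} (hm : k < m) :
    sumLaw (fun i => ber (p i)) m = 0 := by
  induction k generalizing m with
  | zero => simp [sumLaw, (Nat.zero_lt_of_lt hm).ne']
  | succ k ih =>
    obtain ⟨m, rfl⟩ := Nat.exists_eq_add_one_of_ne_zero (Nat.zero_lt_of_lt hm).ne'
    rw [sumLaw_succ, conv_ber_succ, ih _ (by omega), ih _ (by omega), mul_zero, mul_zero, add_zero]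

theorem sumLaw_ber_nonneg {k : ℕ} {p : Fin k → ℝ} (hp : ∀ i, p i ∈ Icc 0 1) (m : ℕ) :
    0 ≤ sumLaw (fun i => ber (p i)) m := by
  induction k generalizing m with
  | zero => simp only [sumLaw, List.ofFn_zero, List.foldr_nil]; positivity
  | succ k ih =>
    have ih := ih (fun i => hp i.succ)
    obtain ⟨h0, h1⟩ := hp 0
    rw [sumLaw_succ]
    cases m with
    | zero => rw [conv_ber_zero]; exact mul_nonneg (by linarith) (ih 0)
    | succ m =>
      rw [conv_ber_succ]
      exact add_nonneg (mul_nonneg (by linarith) (ih _)) (mul_nonneg h0 (ih _))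

theorem sumLaw_ber_pos {k : ℕ} {p : Fin k → ℝ} (hp : ∀ i, p i ∈ Ioo 0 1) {m : ℕ} (hm : m ≤ k) :
    0 < sumLaw (fun i => ber (p i)) m := by
  induction k generalizing m with
  | zero => simp [sumLaw, Nat.le_zero.mp hm]
  | succ k ih =>
    have hnonneg := sumLaw_ber_nonneg (fun i => Ioo_subset_Icc_self (hp i.succ))
    obtain ⟨h0, h1⟩ := hp 0
    rw [sumLaw_succ]
    cases m with
    | zero => rw [conv_ber_zero]; exact mul_pos (by linarith) (ih (fun i => hp i.succ) k.zero_le)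
    | succ m =>
      rw [conv_ber_succ]
      exact add_pos_of_nonneg_of_pos (mul_nonneg (by linarith) (hnonneg _))
        (mul_pos h0 (ih (fun i => hp i.succ) (by omega)))

theorem rpow_mul_rpow_one_sub_eq_mul_div_rpow {x y : ℝ} (α : ℝ) (hx : 0 ≤ x) (hy : 0 < y) :
    x ^ α * y ^ (1 - α) = y * (x / y) ^ α := by
  rw [Real.div_rpow hx hy.le, Real.rpow_sub hy, Real.rpow_one]
  ring

theorem convexOn_rpow_mul_rpow_one_sub {α : ℝ} (hα : 1 ≤ α) :
    ConvexOn ℝ (Ici 0 ×ˢ Ioi 0) fun z : ℝ × ℝ => z.1 ^ α * z.2 ^ (1 - α) := by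
  refine ⟨(convex_Ici 0).prod (convex_Ioi 0), ?_⟩
  rintro ⟨x₁, y₁⟩ ⟨hx₁, hy₁⟩ ⟨x₂, y₂⟩ ⟨hx₂, hy₂⟩ c d hc hd hcd
  simp only [mem_Ici, mem_Ioi] at hx₁ hy₁ hx₂ hy₂
  have hY : 0 < c * y₁ + d * y₂ := by
    simpa using (convex_Ioi (0 : ℝ)) (mem_Ioi.2 hy₁) (mem_Ioi.2 hy₂) hc hd hcd
  set Y := c * y₁ + d * y₂
  have hmix : (c * x₁ + d * x₂) / Y = (c * y₁ / Y) * (x₁ / y₁) + (d * y₂ / Y) * (x₂ / y₂) := by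
    field_simp
  have hjensen := (convexOn_rpow hα).2 (mem_Ici.2 (div_nonneg hx₁ hy₁.le))
    (mem_Ici.2 (div_nonneg hx₂ hy₂.le)) (by positivity : 0 ≤ c * y₁ / Y)
    (by positivity : 0 ≤ d * y₂ / Y) (by rw [← add_div, div_self hY.ne'])
  simp only [smul_eq_mul, Prod.smul_mk, Prod.mk_add_mk] at hjensen ⊢
  rw [rpow_mul_rpow_one_sub_eq_mul_div_rpow α hx₁ hy₁,
    rpow_mul_rpow_one_sub_eq_mul_div_rpow α hx₂ hy₂,
    rpow_mul_rpow_one_sub_eq_mul_div_rpow α (by positivity) hY, hmix]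
  calc Y * ((c * y₁ / Y) * (x₁ / y₁) + (d * y₂ / Y) * (x₂ / y₂)) ^ α
      ≤ Y * ((c * y₁ / Y) * (x₁ / y₁) ^ α + (d * y₂ / Y) * (x₂ / y₂) ^ α) :=
        mul_le_mul_of_nonneg_left hjensen hY.le
    _ = c * (y₁ * (x₁ / y₁) ^ α) + d * (y₂ * (x₂ / y₂) ^ α) := by field_simp

noncomputable def hellingerSum (α : ℝ) (N : ℕ) (P Q : ℕ → ℝ) : ℝ :=
  ∑ m ∈ Finset.range N, P m ^ α * Q m ^ (1 - α)

theorem renyiDiv_eq_log_hellingerSum {α : ℝ} (hα : 0 < α) {N : ℕ} {P : ℕ → ℝ}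
    (hP : ∀ m, N ≤ m → P m = 0) (Q : ℕ → ℝ) :
    renyiDiv α P Q = (α - 1)⁻¹ * Real.log (hellingerSum α N P Q) := by
  rw [renyiDiv, hellingerSum, tsum_eq_sum]
  intro m hm
  rw [hP m (by simpa using hm), Real.zero_rpow hα.ne', zero_mul]

theorem convexOn_hellingerSum {E : Type*} [AddCommGroup E] [Module ℝ E] {s : Set E}
    (hs : Convex ℝ s) {α : ℝ} (hα : 1 ≤ α) {N : ℕ} {P Q : E → ℕ → ℝ}
    (hP : ∀ x y (c d : ℝ), c + d = 1 → P (c • x + d • y) = c • P x + d • P y)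
    (hQ : ∀ x y (c d : ℝ), c + d = 1 → Q (c • x + d • y) = c • Q x + d • Q y)
    (hP₀ : ∀ x ∈ s, ∀ m, 0 ≤ P x m) (hQ₀ : ∀ x ∈ s, ∀ m < N, 0 < Q x m) :
    ConvexOn ℝ s fun x => hellingerSum α N (P x) (Q x) := by
  refine ⟨hs, fun x hx y hy c d hc hd hcd => ?_⟩
  simp only [hellingerSum, hP x y c d hcd, hQ x y c d hcd, smul_eq_mul, Finset.mul_sum,
    ← Finset.sum_add_distrib]
  refine Finset.sum_le_sum fun m hm => ?_
  have hm := Finset.mem_range.1 hm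
  exact (convexOn_rpow_mul_rpow_one_sub hα).2 (x := (P x m, Q x m)) (y := (P y m, Q y m))
    ⟨hP₀ x hx m, hQ₀ x hx m hm⟩ ⟨hP₀ y hy m, hQ₀ y hy m hm⟩ hc hd hcd

theorem ConvexOn.exists_endpoint_ge {a b z : ℝ} {f : ℝ → ℝ} (hf : ConvexOn ℝ (Icc a b) f)
    (hz : z ∈ Icc a b) : ∃ t, (t = a ∨ t = b) ∧ f z ≤ f t := by
  have hab := hz.1.trans hz.2
  have := hf.le_on_segment (left_mem_Icc.2 hab) (right_mem_Icc.2 hab)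
    (by rwa [segment_eq_Icc hab])
  rcases le_total (f a) (f b) with h | h
  · exact ⟨b, Or.inr rfl, by rwa [max_eq_right h] at this⟩
  · exact ⟨a, Or.inl rfl, by rwa [max_eq_left h] at this⟩

theorem exists_vertex_ge_of_convexOn_update {ι : Type*} [Fintype ι] [DecidableEq ι]
    {a b : ℝ} {F : (ι → ℝ) → ℝ}
    (hF : ∀ r, (∀ i, r i ∈ Icc a b) → ∀ i, ConvexOn ℝ (Icc a b) fun t => F (update r i t))
    {r : ι → ℝ} (hr : ∀ i, r i ∈ Icc a b) :
    ∃ s : ι → ℝ, (∀ i, s i = a ∨ s i = b) ∧ F r ≤ F s := by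
  suffices ∀ T : Finset ι, ∀ r, (∀ i, r i ∈ Icc a b) → (∀ i ∉ T, r i = a ∨ r i = b) →
      ∃ s : ι → ℝ, (∀ i, s i = a ∨ s i = b) ∧ F r ≤ F s by
    exact this Finset.univ r hr (by simp)
  intro T
  induction T using Finset.induction_on with
  | empty => exact fun r _ hr => ⟨r, fun i => hr i (Finset.notMem_empty i), le_rfl⟩
  | insert j T _ ih =>
    intro r hr hrT
    obtain ⟨t, ht, hle⟩ := (hF r hr j).exists_endpoint_ge (hr j)
    have htab : t ∈ Icc a b := by
      have hab := (hr j).1.trans (hr j).2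
      rcases ht with rfl | rfl
      exacts [left_mem_Icc.2 hab, right_mem_Icc.2 hab]
    have hvertex : ∀ i ∉ T, update r j t i = a ∨ update r j t i = b := by
      intro i hi
      rcases eq_or_ne i j with rfl | hij
      · simpa using ht
      · rw [update_of_ne hij]
        exact hrT i (by simp [hij, hi])
    obtain ⟨s, hs, hle'⟩ :=
      ih (update r j t) (forall_update_iff _ _ |>.2 ⟨htab, fun i _ => hr i⟩) hvertex
    exact ⟨s, hs, by simpa using hle.trans hle'⟩

theorem ber_mix {c d : ℝ} (hcd : c + d = 1) (x y : ℝ) :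
    ber (c * x + d * y) = c • ber x + d • ber y := by
  ext k
  simp only [ber, Pi.add_apply, Pi.smul_apply, smul_eq_mul]
  split_ifs
  · linear_combination -hcd
  all_goals ring

theorem sumLaw_ber_update_mix {k : ℕ} (p : Fin k → ℝ) (i : Fin k) {c d : ℝ} (hcd : c + d = 1)
    (x y : ℝ) :
    sumLaw (fun j => ber (update p i (c * x + d * y) j))
      = c • sumLaw (fun j => ber (update p i x j))
        + d • sumLaw (fun j => ber (update p i y j)) := by
  simp only [apply_update (fun _ => ber), ber_mix hcd, sumLaw_update_add]

-- The `n + 2` terms cover the common support `{0, …, n + 1}` of the two laws.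
noncomputable def bernoulliHellinger {n : ℕ} (α : ℝ) (p : Fin (n + 1) → ℝ) (p' : ℝ) : ℝ :=
  hellingerSum α (n + 2) (sumLaw fun i => ber (p i)) (sumLaw fun i => ber (update p 0 p' i))

theorem renyiDiv_eq_log_bernoulliHellinger {n : ℕ} {α : ℝ} (hα : 0 < α) (p : Fin (n + 1) → ℝ)
    (p' : ℝ) :
    renyiDiv α (sumLaw fun i => ber (p i)) (sumLaw fun i => ber (update p 0 p' i))
      = (α - 1)⁻¹ * Real.log (bernoulliHellinger α p p') :=
  renyiDiv_eq_log_hellingerSum hα (fun _ hm => sumLaw_ber_eq_zero p (by omega)) _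

theorem bernoulliHellinger_pos {n : ℕ} (α : ℝ) {p : Fin (n + 1) → ℝ} (hp : ∀ i, p i ∈ Ioo 0 1)
    {p' : ℝ} (hp' : p' ∈ Ioo 0 1) : 0 < bernoulliHellinger α p p' := by
  have hp'' : ∀ i, update p 0 p' i ∈ Ioo 0 1 := forall_update_iff _ _ |>.2 ⟨hp', fun i _ => hp i⟩
  refine Finset.sum_pos (fun m hm => ?_) Finset.nonempty_range_add_one
  have hm : m ≤ n + 1 := Nat.lt_succ_iff.1 (Finset.mem_range.1 hm)
  exact mul_pos (Real.rpow_pos_of_pos (sumLaw_ber_pos hp hm) _)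
    (Real.rpow_pos_of_pos (sumLaw_ber_pos hp'' hm) _)

section Convexity

variable {n : ℕ} {α : ℝ} {s : Set ℝ} {p : Fin (n + 1) → ℝ}

theorem convexOn_bernoulliHellinger_update (hα : 1 ≤ α) (hs : Convex ℝ s) (hs₀₁ : s ⊆ Ioo 0 1)
    (hp : ∀ i, p i ∈ s) {p' : ℝ} (hp' : p' ∈ s) (i : Fin (n + 1)) :
    ConvexOn ℝ s fun t => bernoulliHellinger α (update p i t) p' := by
  have hmem : ∀ t ∈ s, ∀ j, update p i t j ∈ s := fun t ht =>
    forall_update_iff _ _ |>.2 ⟨ht, fun j _ => hp j⟩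
  refine convexOn_hellingerSum hs hα (fun x y c d hcd => ?_) (fun x y c d hcd => ?_)
    (fun t ht m => sumLaw_ber_nonneg (fun j => Ioo_subset_Icc_self (hs₀₁ (hmem t ht j))) m)
    (fun t ht m hm => sumLaw_ber_pos (fun j => hs₀₁ ?_) (Nat.lt_succ_iff.1 hm))
  · exact sumLaw_ber_update_mix p i hcd x y
  · rcases eq_or_ne i 0 with rfl | hi
    · simp only [update_idem, ← add_smul, hcd, one_smul]
    · simp only [update_comm hi, smul_eq_mul]
      exact sumLaw_ber_update_mix _ i hcd x y
  · exact forall_update_iff _ _ |>.2 ⟨hp', fun j _ => hmem t ht j⟩ j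

theorem convexOn_bernoulliHellinger_replace (hα : 1 ≤ α) (hs : Convex ℝ s)
    (hs₀₁ : s ⊆ Ioo 0 1) (hp : ∀ i, p i ∈ s) :
    ConvexOn ℝ s fun t => bernoulliHellinger α p t := by
  refine convexOn_hellingerSum hs hα (fun x y c d hcd => ?_) (fun x y c d hcd => ?_)
    (fun _ _ m => sumLaw_ber_nonneg (fun j => Ioo_subset_Icc_self (hs₀₁ (hp j))) m)
    (fun t ht m hm => sumLaw_ber_pos (fun j => hs₀₁ ?_) (Nat.lt_succ_iff.1 hm))
  · rw [← add_smul, hcd, one_smul]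
  · exact sumLaw_ber_update_mix p 0 hcd x y
  · exact forall_update_iff _ _ |>.2 ⟨ht, fun j _ => hp j⟩ j

end Convexity

theorem renyi_extremal_reduction_general
    (n : ℕ) (θ α : ℝ) (hθ : θ ≤ 1/4) (hα : 1 < α)
    (p : Fin (n + 1) → ℝ) (p1' : ℝ)
    (hp : ∀ i, p i ∈ Set.Icc (1/2 - θ) (1/2 + θ))
    (hp1' : p1' ∈ Set.Icc (1/2 - θ) (1/2 + θ)) :
    ∃ (q : Fin (n + 1) → ℝ) (q1' : ℝ),
      (∀ i, q i = 1/2 - θ ∨ q i = 1/2 + θ) ∧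
      (q1' = 1/2 - θ ∨ q1' = 1/2 + θ) ∧
      renyiDiv α (sumLaw fun i => ber (p i))
          (sumLaw fun i => ber (Function.update p 0 p1' i))
        ≤ renyiDiv α (sumLaw fun i => ber (q i))
            (sumLaw fun i => ber (Function.update q 0 q1' i)) := by
  have hI : Icc (1/2 - θ) (1/2 + θ) ⊆ Ioo 0 1 := fun x hx =>
    ⟨by linarith [hx.1], by linarith [hx.2]⟩
  obtain ⟨q, hq, hpq⟩ := exists_vertex_ge_of_convexOn_update
    (F := fun v => bernoulliHellinger α v p1')
    (fun r hr i => convexOn_bernoulliHellinger_update hα.le (convex_Icc _ _) hI hr hp1' i) hp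
  have hab := hp1'.1.trans hp1'.2
  have hqI : ∀ i, q i ∈ Icc (1/2 - θ) (1/2 + θ) := fun i => by
    rcases hq i with h | h <;> rw [h]
    exacts [left_mem_Icc.2 hab, right_mem_Icc.2 hab]
  obtain ⟨q1', hq1', hqq⟩ :=
    (convexOn_bernoulliHellinger_replace hα.le (convex_Icc _ _) hI hqI).exists_endpoint_ge hp1'
  refine ⟨q, q1', hq, hq1', ?_⟩
  rw [renyiDiv_eq_log_bernoulliHellinger (by linarith),
    renyiDiv_eq_log_bernoulliHellinger (by linarith)]
  exact mul_le_mul_of_nonneg_left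
    (Real.log_le_log (bernoulliHellinger_pos α (fun i => hI (hp i)) (hI hp1')) (hpq.trans hqq))
    (inv_nonneg.2 (by linarith))

/-- Extremal reduction: for `Xᵢ ~ Ber(pᵢ)` and `X'₁ ~ Ber(p'₁)` independent with
parameters in `[1/2−θ, 1/2+θ]`, the divergence
`D_α(law(X₁+⋯+Xₙ) ‖ law(X'₁+X₂+⋯+Xₙ))` is bounded by the same divergence for
some parameter tuple whose entries all lie in `{1/2−θ, 1/2+θ}`. -/
theorem renyi_extremal_reduction
    (n : ℕ) (θ α : ℝ) (hθ0 : 0 ≤ θ) (hθ : θ ≤ 1/4) (hα : 1 < α)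
    (p : Fin (n + 1) → ℝ) (p1' : ℝ)
    (hp : ∀ i, p i ∈ Set.Icc (1/2 - θ) (1/2 + θ))
    (hp1' : p1' ∈ Set.Icc (1/2 - θ) (1/2 + θ)) :
    ∃ (q : Fin (n + 1) → ℝ) (q1' : ℝ),
      (∀ i, q i = 1/2 - θ ∨ q i = 1/2 + θ) ∧
      (q1' = 1/2 - θ ∨ q1' = 1/2 + θ) ∧
      renyiDiv α (sumLaw fun i => ber (p i))
          (sumLaw fun i => ber (Function.update p 0 p1' i))
        ≤ renyiDiv α (sumLaw fun i => ber (q i))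
            (sumLaw fun i => ber (Function.update q 0 q1' i)) :=
  renyi_extremal_reduction_general n θ α hθ hα p p1' hp hp1'
end

section
/- Conversion from RDP to approximate DP: if a mechanism satisfies (α, ε(α))-Rényi DP for all α > 1 and s := sup_{α>1} ε(α)/α < ∞, then for any δ ∈ (0,1) it satisfies (ε_DP, δ)-approximate DP with ε_DP ≤ s + 2√(s·log(1/δ)). -/
/-!
Bounding `ε(α) ≤ s·α = s + s(α - 1)` turns the conversion bound into
`ε_DP ≤ s + s·t + log(1/δ)/t` with `t = α - 1 > 0`, and the AM-GM choice
`t = √(log(1/δ)/s)` makes both `t`-terms equal to `√(s·log(1/δ))`.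
-/

open Real

lemma mul_sqrt_div_add_div_sqrt_div {s L : ℝ} (hs : 0 < s) (hL : 0 ≤ L) :
    s * √(L / s) + L / √(L / s) = 2 * √(s * L) := by
  have hsL : 0 ≤ s * L := mul_nonneg hs.le hL
  have hsqrt : √(L / s) = √(s * L) / s := by
    rw [show L / s = s * L / s ^ 2 by field_simp, sqrt_div' _ (sq_nonneg s), sqrt_sq hs.le]
  rcases hsL.eq_or_lt with hzero | hpos
  · rw [hsqrt, ← hzero, sqrt_zero, zero_div, div_zero, mul_zero, add_zero, mul_zero]
  · have hroot : √(s * L) ^ 2 = s * L := sq_sqrt hsL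
    rw [hsqrt]
    field_simp
    nlinarith [hroot]

lemma le_add_two_sqrt_mul_of_forall_le {x s L : ℝ} (hs : 0 < s) (hL : 0 < L)
    (h : ∀ t : ℝ, 0 < t → x ≤ s * (1 + t) + L / t) :
    x ≤ s + 2 * √(s * L) := by
  have hbound := h (√(L / s)) (sqrt_pos.2 (div_pos hL hs))
  rw [← mul_sqrt_div_add_div_sqrt_div hs hL.le]
  linarith

/-- Conversion from RDP to approximate DP: if `ε(α)/α ≤ s` for all `α > 1`
and `ε_DP` satisfies the standard RDP-to-DP conversion bound
`ε_DP ≤ ε(α) + log(1/δ)/(α−1)` for every `α > 1`, then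
`ε_DP ≤ s + 2√(s·log(1/δ))`. -/
theorem rdp_to_approx_dp
    (ε : ℝ → ℝ) (εDP s δ : ℝ)
    (hδ0 : 0 < δ) (hδ1 : δ < 1) (hs : 0 < s)
    (hsup : ∀ α : ℝ, 1 < α → ε α / α ≤ s)
    (hconv : ∀ α : ℝ, 1 < α → εDP ≤ ε α + Real.log (1/δ) / (α - 1)) :
    εDP ≤ s + 2 * Real.sqrt (s * Real.log (1/δ)) := by
  have hL : 0 < log (1 / δ) := log_pos (one_lt_one_div hδ0 hδ1)
  refine le_add_two_sqrt_mul_of_forall_le hs hL fun t ht => ?_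
  have hα : 1 < 1 + t := lt_add_of_pos_right 1 ht
  have hε : ε (1 + t) ≤ s * (1 + t) := (div_le_iff₀ (by linarith)).1 (hsup _ hα)
  calc εDP ≤ ε (1 + t) + log (1 / δ) / (1 + t - 1) := hconv _ hα
    _ ≤ s * (1 + t) + log (1 / δ) / t := by rw [add_sub_cancel_left]; linarith
end
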